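/- Let c > 0 and let μ^c(p) = exp(−c p⁰)/(4π c K₂(c²)) with p⁰ = √(c² + |p|²). Then for all integers m ≥ 0 and k ≥ 0: (i) ∫_{ℝ³} |p|^{2m} μ^c(p) dp = ((2m+2)!/(2^{m+1}(m+1)!))·K_{m+2}(c²)/K₂(c²); (ii) ∫_{ℝ³} |p|^{2m} (p⁰)^{2k−1} μ^c(p) dp = Σ_{i=0}^{k} binom(k,i)·((2(m+i+1))!/(2^{m+i+1}(m+i+1)!))·c^{2(k−i)−1}·K_{m+i+1}(c²)/K₂(c²). -/

import Mathlib

open Real MeasureTheory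
open scoped BigOperators

noncomputable section

/-- Momentum space `ℝ³`. -/
abbrev E3 := EuclideanSpace ℝ (Fin 3)

/-- Relativistic energy `p⁰ = √(c² + |p|²)`. -/
def pZ (c : ℝ) (p : E3) : ℝ := Real.sqrt (c ^ 2 + ‖p‖ ^ 2)

/-- Modified Bessel function
`K_j(γ) = (2^j j!/(2j)!)·γ^{−j}·∫_γ^∞ e^{−λ}(λ² − γ²)^{j−1/2} dλ`. -/
def Kb (j : ℕ) (γ : ℝ) : ℝ :=
  ((2 : ℝ) ^ j * Nat.factorial j / Nat.factorial (2 * j)) * γ ^ (-(j : ℝ)) *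
    ∫ l in Set.Ioi γ, Real.exp (-l) * (l ^ 2 - γ ^ 2) ^ ((j : ℝ) - 1 / 2)

/-- Normalized relativistic Maxwellian `μ^c(p) = exp(−c p⁰)/(4π c K₂(c²))`. -/
def muC (c : ℝ) (p : E3) : ℝ :=
  Real.exp (-(c * pZ c p)) / (4 * Real.pi * c * Kb 2 (c ^ 2))

open Set Filter Asymptotics
open scoped Topology

lemma bigO_aux (γ : ℝ) (n : ℕ) (s : ℝ) (hs : 0 ≤ s) :
    (fun l => Real.exp (-l) * l ^ n * (l ^ 2 - γ ^ 2) ^ s) =O[atTop]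
      (fun l => Real.exp (-(1/2) * l)) := by
  have h1 : (fun l : ℝ => l ^ ((n : ℝ) + 2 * s)) =o[atTop]
      (fun l : ℝ => Real.exp ((1/2) * l)) := isLittleO_rpow_exp_pos_mul_atTop _ (by norm_num)
  have h2 : (fun l : ℝ => l ^ ((n : ℝ) + 2 * s) * Real.exp (-l)) =o[atTop]
      (fun l : ℝ => Real.exp ((1/2) * l) * Real.exp (-l)) :=
    h1.mul_isBigO (isBigO_refl _ _)
  have h3 : (fun l : ℝ => Real.exp ((1/2) * l) * Real.exp (-l)) =
      fun l : ℝ => Real.exp (-(1/2) * l) := by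
    funext l; rw [← Real.exp_add]; ring_nf
  rw [h3] at h2
  refine IsBigO.trans ?_ h2.isBigO
  rw [isBigO_iff]
  refine ⟨1, ?_⟩
  filter_upwards [eventually_ge_atTop (max |γ| 1)] with l hl
  have hl1 : (1:ℝ) ≤ l := le_trans (le_max_right _ _) hl
  have hl0 : (0:ℝ) < l := lt_of_lt_of_le one_pos hl1
  have hγ2 : γ ^ 2 ≤ l ^ 2 := by
    have h := le_trans (le_max_left |γ| 1) hl
    calc γ ^ 2 ≤ |γ| ^ 2 := by rw [sq_abs]
    _ ≤ l ^ 2 := pow_le_pow_left₀ (abs_nonneg γ) h 2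
  have key : (l ^ 2 - γ ^ 2) ^ s ≤ l ^ ((2:ℝ) * s) := by
    calc (l ^ 2 - γ ^ 2) ^ s ≤ (l ^ 2) ^ s :=
          Real.rpow_le_rpow (sub_nonneg.mpr hγ2) (by linarith [sq_nonneg γ]) hs
    _ = l ^ ((2:ℝ) * s) := by
        rw [← Real.rpow_natCast l 2, ← Real.rpow_mul hl0.le]; norm_num
  have hnn : 0 ≤ Real.exp (-l) * l ^ n * (l ^ 2 - γ ^ 2) ^ s := by
    have := Real.rpow_nonneg (sub_nonneg.mpr hγ2) s
    positivity
  rw [Real.norm_of_nonneg hnn, one_mul, Real.norm_of_nonneg (by positivity)]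
  calc Real.exp (-l) * l ^ n * (l ^ 2 - γ ^ 2) ^ s
      ≤ Real.exp (-l) * l ^ n * l ^ ((2:ℝ) * s) := by
        apply mul_le_mul_of_nonneg_left key (by positivity)
  _ = l ^ ((n : ℝ) + 2 * s) * Real.exp (-l) := by
        rw [← Real.rpow_natCast l n]
        rw [show Real.exp (-l) * l ^ (n:ℝ) * l ^ (2*s) =
          l ^ (n:ℝ) * l ^ (2*s) * Real.exp (-l) by ring, ← Real.rpow_add hl0]

lemma integrableOn_aux {γ : ℝ} (hγ : 0 < γ) (n : ℕ) {s : ℝ} (hs : 0 ≤ s) :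
    IntegrableOn (fun l => Real.exp (-l) * l ^ n * (l ^ 2 - γ ^ 2) ^ s) (Ioi γ) := by
  apply integrable_of_isBigO_exp_neg (f := fun l => Real.exp (-l) * l ^ n * (l ^ 2 - γ ^ 2) ^ s)
    (by norm_num : (0:ℝ) < 1/2) ?_ (bigO_aux γ n s hs)
  apply ContinuousOn.mul
  · exact (Real.continuous_exp.comp continuous_neg).continuousOn.mul
      (continuous_pow n).continuousOn
  · apply ContinuousOn.rpow_const ((continuous_pow 2).continuousOn.sub continuousOn_const)
    exact fun x _ => Or.inr hs

lemma tendsto_aux (γ : ℝ) (n : ℕ) {s : ℝ} (hs : 0 ≤ s) :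
    Tendsto (fun l => Real.exp (-l) * l ^ n * (l ^ 2 - γ ^ 2) ^ s) atTop (𝓝 0) := by
  refine (bigO_aux γ n s hs).trans_tendsto ?_
  exact Real.tendsto_exp_atBot.comp
    (tendsto_id.const_mul_atTop_of_neg (by norm_num : (-(1/2):ℝ) < 0))

lemma contOn_aux (γ : ℝ) {s : ℝ} (hs : 0 ≤ s) :
    ContinuousOn (fun l : ℝ => Real.exp (-l) * (l ^ 2 - γ ^ 2) ^ s) (Ici γ) := by
  apply ContinuousOn.mul ((Real.continuous_exp.comp continuous_neg).continuousOn)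
  apply ContinuousOn.rpow_const ((continuous_pow 2).continuousOn.sub continuousOn_const)
  exact fun x _ => Or.inr hs

lemma ibp_aux {γ : ℝ} (hγ : 0 < γ) {s : ℝ} (hs : 0 ≤ s) :
    ∫ l in Ioi γ, Real.exp (-l) * (l ^ 2 - γ ^ 2) ^ (s + 1)
      = (2 * (s + 1)) * ∫ l in Ioi γ, Real.exp (-l) * l * (l ^ 2 - γ ^ 2) ^ s := by
  set F : ℝ → ℝ := fun l => -(Real.exp (-l) * (l ^ 2 - γ ^ 2) ^ (s + 1)) with hF
  set F' : ℝ → ℝ := fun l => Real.exp (-l) * (l ^ 2 - γ ^ 2) ^ (s + 1)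
      - (2 * (s + 1)) * (Real.exp (-l) * l * (l ^ 2 - γ ^ 2) ^ s) with hF'
  have I0 : IntegrableOn (fun l => Real.exp (-l) * (l ^ 2 - γ ^ 2) ^ (s + 1)) (Ioi γ) := by
    simpa using integrableOn_aux hγ 0 (by linarith : (0:ℝ) ≤ s + 1)
  have I1 : IntegrableOn (fun l => Real.exp (-l) * l * (l ^ 2 - γ ^ 2) ^ s) (Ioi γ) := by
    simpa using integrableOn_aux hγ 1 hs
  have hderiv : ∀ x ∈ Ioi γ, HasDerivAt F (F' x) x := by
    intro x hx
    have hx0 : 0 < x ^ 2 - γ ^ 2 := by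
      have : γ < x := hx
      nlinarith
    have d1 : HasDerivAt (fun l : ℝ => l ^ 2 - γ ^ 2) (2 * x) x := by
      simpa using (hasDerivAt_pow 2 x).sub_const (γ ^ 2)
    have d2 : HasDerivAt (fun l : ℝ => (l ^ 2 - γ ^ 2) ^ (s + 1))
        ((s + 1) * (x ^ 2 - γ ^ 2) ^ s * (2 * x)) x := by
      have h := (Real.hasDerivAt_rpow_const (x := x ^ 2 - γ ^ 2) (p := s + 1)
        (Or.inl hx0.ne')).comp x d1
      simpa [add_sub_cancel_right, Function.comp_def] using h
    have d3 : HasDerivAt (fun l : ℝ => Real.exp (-l)) (-Real.exp (-x)) x := by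
      simpa using ((hasDerivAt_id x).neg.exp)
    have d4 := (d3.mul d2).neg
    convert d4 using 1
    · rfl
    · rfl
    · rfl
    simp only [hF']
    ring
  have hcont : ContinuousWithinAt F (Ici γ) γ := by
    have : ContinuousOn F (Ici γ) := (contOn_aux γ (by linarith : (0:ℝ) ≤ s + 1)).neg
    exact this γ self_mem_Ici
  have hint : IntegrableOn F' (Ioi γ) := I0.sub (I1.const_mul _)
  have htends : Tendsto F atTop (𝓝 0) := by
    have h := (tendsto_aux γ 0 (by linarith : (0:ℝ) ≤ s + 1)).neg
    simp only [pow_zero, mul_one, neg_zero] at h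
    simpa [hF] using h
  have key := integral_Ioi_of_hasDerivAt_of_tendsto hcont hderiv hint htends
  have hFγ : F γ = 0 := by
    simp [hF, Real.zero_rpow (by linarith : s + 1 ≠ 0)]
  rw [hFγ, sub_zero] at key
  have hsplit : ∫ l in Ioi γ, F' l
      = (∫ l in Ioi γ, Real.exp (-l) * (l ^ 2 - γ ^ 2) ^ (s + 1))
        - (2 * (s + 1)) * ∫ l in Ioi γ, Real.exp (-l) * l * (l ^ 2 - γ ^ 2) ^ s := by
    rw [hF']
    rw [integral_sub I0 (I1.const_mul _), integral_const_mul]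
  rw [key] at hsplit
  linarith

lemma gamma52 : Real.Gamma ((3:ℝ)/2 + 1) = 3/4 * Real.sqrt π := by
  rw [Real.Gamma_add_one (by norm_num)]
  have : (3:ℝ)/2 = 1/2 + 1 := by norm_num
  rw [this, Real.Gamma_add_one (by norm_num), Real.Gamma_one_half_eq]
  ring

lemma ball_vol : (volume (Metric.ball (0 : E3) 1)).toReal = 4 * π / 3 := by
  rw [EuclideanSpace.volume_ball]
  have hcard : (Fintype.card (Fin 3) : ℝ) = 3 := by simp
  simp only [Fintype.card_fin]
  have h52 : Real.Gamma ((3:ℝ)/2 + 1) = 3/4 * Real.sqrt π := gamma52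
  rw [show ((3:ℕ):ℝ)/2 + 1 = (3:ℝ)/2 + 1 by norm_num, h52]
  have hs : Real.sqrt π ^ 3 / (3/4 * Real.sqrt π) = 4 * π / 3 := by
    have h1 : Real.sqrt π ^ 3 = π * Real.sqrt π := by
      rw [pow_succ, sq_sqrt (le_of_lt Real.pi_pos)]
    rw [h1]
    have h2 : Real.sqrt π ≠ 0 := by positivity
    field_simp
  rw [hs]
  simp [ENNReal.toReal_ofReal (by positivity : (0:ℝ) ≤ 4 * π / 3)]

lemma sphere_reduce (F : ℝ → ℝ) :
    ∫ p : E3, F ‖p‖ = (4 * π) * ∫ r in Ioi (0:ℝ), r ^ 2 * F r := by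
  rw [MeasureTheory.integral_fun_norm_addHaar volume F]
  have hdim : Module.finrank ℝ E3 = 3 := finrank_euclideanSpace_fin
  rw [hdim, measureReal_def, ball_vol]
  simp only [smul_eq_mul, nsmul_eq_mul]
  norm_num
  ring

lemma bigO2 {c : ℝ} (hc : 0 < c) (d n : ℕ) :
    (fun r => r ^ d * (Real.sqrt (c^2 + r^2)) ^ ((n:ℤ) - 1) *
        Real.exp (-(c * Real.sqrt (c^2 + r^2))))
      =O[atTop] (fun r => Real.exp (-(c/2) * r)) := by
  have h1 : (fun r : ℝ => r ^ (d+n) * Real.exp (-(c * r))) =o[atTop]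
      (fun r => Real.exp ((c/2)*r) * Real.exp (-(c*r))) :=
    (isLittleO_pow_exp_pos_mul_atTop (d+n) (half_pos hc)).mul_isBigO (isBigO_refl _ _)
  have h3 : (fun r : ℝ => Real.exp ((c/2)*r) * Real.exp (-(c*r)))
      = fun r : ℝ => Real.exp (-(c/2) * r) := by
    funext r; rw [← Real.exp_add]; ring_nf
  rw [h3] at h1
  refine IsBigO.trans ?_ h1.isBigO
  rw [isBigO_iff]
  refine ⟨2^n / c, ?_⟩
  filter_upwards [eventually_ge_atTop (max c 1)] with r hr
  have hr1 : (1:ℝ) ≤ r := le_trans (le_max_right _ _) hr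
  have hrc : c ≤ r := le_trans (le_max_left _ _) hr
  have hr0 : (0:ℝ) < r := lt_of_lt_of_le one_pos hr1
  set s := Real.sqrt (c^2 + r^2) with hsdef
  have hs0 : 0 < s := Real.sqrt_pos.mpr (by positivity)
  have hsr : r ≤ s := (Real.le_sqrt hr0.le (by positivity)).mpr (by nlinarith)
  have hs2r : s ≤ 2 * r := by
    calc s ≤ Real.sqrt ((2*r)^2) := Real.sqrt_le_sqrt (by nlinarith)
    _ = 2*r := Real.sqrt_sq (by positivity)
  rw [zpow_sub_one₀ hs0.ne', zpow_natCast]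
  have hnn : 0 ≤ r ^ d * (s ^ n * s⁻¹) * Real.exp (-(c * s)) := by positivity
  rw [Real.norm_of_nonneg hnn, Real.norm_of_nonneg (by positivity)]
  have key : r ^ d * (s ^ n * s⁻¹) * Real.exp (-(c * s))
      ≤ r ^ d * ((2*r) ^ n * c⁻¹) * Real.exp (-(c * r)) := by
    have e1 : s ^ n ≤ (2*r) ^ n := pow_le_pow_left₀ hs0.le hs2r n
    have e2 : s⁻¹ ≤ c⁻¹ := by
      apply inv_anti₀ hc
      calc c ≤ r := hrc
      _ ≤ s := hsr
    have e3 : Real.exp (-(c * s)) ≤ Real.exp (-(c * r)) := by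
      apply Real.exp_le_exp.mpr
      nlinarith
    have e4 : s ^ n * s⁻¹ ≤ (2*r) ^ n * c⁻¹ :=
      mul_le_mul e1 e2 (by positivity) (by positivity)
    have e5 : r ^ d * (s ^ n * s⁻¹) ≤ r ^ d * ((2*r) ^ n * c⁻¹) :=
      mul_le_mul_of_nonneg_left e4 (by positivity)
    exact mul_le_mul e5 e3 (by positivity) (by positivity)
  calc r ^ d * (s ^ n * s⁻¹) * Real.exp (-(c * s))
      ≤ r ^ d * ((2*r) ^ n * c⁻¹) * Real.exp (-(c * r)) := key
  _ = 2 ^ n / c * (r ^ (d + n) * Real.exp (-(c * r))) := by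
      rw [mul_pow, pow_add]; field_simp

lemma subst_aux {c : ℝ} (hc : 0 < c) (m n : ℕ) :
    ∫ r in Ioi (0:ℝ), r ^ (2*m+2) * (Real.sqrt (c^2 + r^2)) ^ ((n:ℤ) - 1) *
        Real.exp (-(c * Real.sqrt (c^2 + r^2)))
      = (1 / c ^ (2*m+n+2)) *
        ∫ l in Ioi (c^2), Real.exp (-l) * l ^ n * (l^2 - (c^2)^2) ^ ((m:ℝ) + 1/2) := by
  set γ : ℝ := c^2 with hγdef
  have hγ : 0 < γ := by positivity
  set φ : ℝ → ℝ := fun r => c * Real.sqrt (c^2 + r^2) with hφdef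
  set φ' : ℝ → ℝ := fun r => c * r / Real.sqrt (c^2 + r^2) with hφ'def
  set G : ℝ → ℝ := fun l => Real.exp (-l) * l ^ n * (l^2 - γ^2) ^ ((m:ℝ) + 1/2) with hGdef
  have hsq : ∀ r : ℝ, 0 < Real.sqrt (c^2 + r^2) :=
    fun r => Real.sqrt_pos.mpr (by positivity)
  have hφ0 : φ 0 = γ := by
    simp only [hφdef, hγdef]
    rw [show c^2 + (0:ℝ)^2 = c^2 by ring, Real.sqrt_sq hc.le]; ring
  -- pointwise identity on Ioi 0
  have hpt : ∀ r ∈ Ioi (0:ℝ),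
      r ^ (2*m+2) * (Real.sqrt (c^2 + r^2)) ^ ((n:ℤ) - 1) *
        Real.exp (-(c * Real.sqrt (c^2 + r^2)))
      = (1 / c ^ (2*m+n+2)) * ((G ∘ φ) r * φ' r) := by
    intro r hr
    have hr0 : 0 < r := hr
    set s : ℝ := Real.sqrt (c^2 + r^2) with hsdef
    have hs0 : 0 < s := hsq r
    have hs2 : s ^ 2 = c^2 + r^2 := Real.sq_sqrt (by positivity)
    have hbase : (c * s)^2 - γ^2 = (c * r)^2 := by
      rw [hγdef]; nlinarith
    have hrpow : ((c*r)^2 : ℝ) ^ ((m:ℝ) + 1/2) = (c*r) ^ (2*m+1) := by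
      rw [← Real.rpow_natCast (c*r) 2, ← Real.rpow_mul (by positivity)]
      rw [show ((2:ℕ):ℝ) * ((m:ℝ) + 1/2) = ((2*m+1 : ℕ):ℝ) by push_cast; ring,
        Real.rpow_natCast]
    have hG : (G ∘ φ) r = Real.exp (-(c*s)) * (c*s) ^ n * (c*r) ^ (2*m+1) := by
      simp only [hGdef, hφdef, Function.comp, ← hsdef]
      rw [hbase, hrpow]
    rw [hG]
    rw [zpow_sub_one₀ hs0.ne' (n:ℤ), zpow_natCast]
    simp only [hφ'def, ← hsdef]
    field_simp
    ring
  -- integrability of the left integrand on Ioi 0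
  have hcontL : ContinuousOn (fun r => r ^ (2*m+2) * (Real.sqrt (c^2 + r^2)) ^ ((n:ℤ) - 1) *
      Real.exp (-(c * Real.sqrt (c^2 + r^2)))) (Ici (0:ℝ)) := by
    have hsqc : Continuous (fun r : ℝ => Real.sqrt (c^2 + r^2)) :=
      Real.continuous_sqrt.comp (continuous_const.add (continuous_pow 2))
    apply ContinuousOn.mul
    · apply ContinuousOn.mul (continuous_pow _).continuousOn
      apply ContinuousOn.zpow₀ hsqc.continuousOn
      exact fun x _ => Or.inl (hsq x).ne'
    · exact (Real.continuous_exp.comp (continuous_neg.comp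
        (continuous_const.mul hsqc))).continuousOn
  have hIntL : IntegrableOn (fun r => r ^ (2*m+2) * (Real.sqrt (c^2 + r^2)) ^ ((n:ℤ) - 1) *
      Real.exp (-(c * Real.sqrt (c^2 + r^2)))) (Ioi (0:ℝ)) :=
    integrable_of_isBigO_exp_neg (half_pos hc) hcontL (bigO2 hc (2*m+2) n)
  -- hypotheses of the change of variables
  have hsqc : Continuous (fun r : ℝ => Real.sqrt (c^2 + r^2)) :=
    Real.continuous_sqrt.comp (continuous_const.add (continuous_pow 2))
  have hf : ContinuousOn φ (Ici 0) := (continuous_const.mul hsqc).continuousOn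
  have hft : Tendsto φ atTop atTop := by
    have hle : (fun r => c * r) ≤ᶠ[atTop] φ := by
      filter_upwards [eventually_ge_atTop (0:ℝ)] with r hr
      have : r ≤ Real.sqrt (c^2 + r^2) := (Real.le_sqrt hr (by positivity)).mpr (by nlinarith)
      simp only [hφdef]
      exact mul_le_mul_of_nonneg_left this hc.le
    exact tendsto_atTop_mono' atTop hle (tendsto_id.const_mul_atTop hc)
  have hff' : ∀ x ∈ Ioi (0:ℝ), HasDerivWithinAt φ (φ' x) (Ioi x) x := by
    intro x hx
    have hpos : (0:ℝ) < c^2 + x^2 := by positivity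
    have d1 : HasDerivAt (fun r : ℝ => c^2 + r^2) (2*x) x := by
      simpa using ((hasDerivAt_pow 2 x).const_add (c^2))
    have d2 : HasDerivAt (fun r : ℝ => Real.sqrt (c^2 + r^2))
        (1 / (2 * Real.sqrt (c^2 + x^2)) * (2*x)) x :=
      (Real.hasDerivAt_sqrt hpos.ne').comp x d1
    have d3 := d2.const_mul c
    have : c * (1 / (2 * Real.sqrt (c^2 + x^2)) * (2*x)) = φ' x := by
      simp only [hφ'def]
      field_simp
    rw [this] at d3
    exact d3.hasDerivWithinAt
  have hg_cont : ContinuousOn G (φ '' Ioi 0) := by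
    apply Continuous.continuousOn
    apply Continuous.mul
    · exact (Real.continuous_exp.comp continuous_neg).mul (continuous_pow n)
    · apply Continuous.rpow_const ((continuous_pow 2).sub continuous_const)
      exact fun x => Or.inr (by positivity)
  have himg : φ '' Ici 0 ⊆ Ici γ := by
    rintro - ⟨r, hr, rfl⟩
    simp only [mem_Ici, hφdef, hγdef]
    have : c ≤ Real.sqrt (c^2 + r^2) := by
      rw [show c = Real.sqrt (c^2) from (Real.sqrt_sq hc.le).symm]
      exact Real.sqrt_le_sqrt (by nlinarith [Real.sq_sqrt (sq_nonneg c)])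
    calc c^2 = c * c := sq c
    _ ≤ c * Real.sqrt (c^2 + r^2) := mul_le_mul_of_nonneg_left this hc.le
  have hg1 : IntegrableOn G (φ '' Ici 0) := by
    apply IntegrableOn.mono_set _ himg
    rw [integrableOn_Ici_iff_integrableOn_Ioi]
    exact integrableOn_aux hγ n (by positivity)
  have hpt' : ∀ r ∈ Ioi (0:ℝ), (G ∘ φ) r * φ' r
      = c ^ (2*m+n+2) * (r ^ (2*m+2) * (Real.sqrt (c^2 + r^2)) ^ ((n:ℤ) - 1) *
        Real.exp (-(c * Real.sqrt (c^2 + r^2)))) := by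
    intro r hr
    rw [hpt r hr]
    field_simp
  have hg2 : IntegrableOn (fun x => (G ∘ φ) x * φ' x) (Ici 0) := by
    rw [integrableOn_Ici_iff_integrableOn_Ioi]
    have h5 : IntegrableOn (fun x => c ^ (2*m+n+2) *
        (x ^ (2*m+2) * (Real.sqrt (c^2 + x^2)) ^ ((n:ℤ) - 1) *
          Real.exp (-(c * Real.sqrt (c^2 + x^2))))) (Ioi (0:ℝ)) :=
      hIntL.const_mul _
    exact h5.congr_fun (fun x hx => (hpt' x hx).symm) measurableSet_Ioi
  calc ∫ r in Ioi (0:ℝ), r ^ (2*m+2) * (Real.sqrt (c^2 + r^2)) ^ ((n:ℤ) - 1) *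
        Real.exp (-(c * Real.sqrt (c^2 + r^2)))
      = ∫ r in Ioi (0:ℝ), (1 / c ^ (2*m+n+2)) * ((G ∘ φ) r * φ' r) :=
        setIntegral_congr_fun measurableSet_Ioi (fun r hr => hpt r hr)
  _ = (1 / c ^ (2*m+n+2)) * ∫ r in Ioi (0:ℝ), (G ∘ φ) r * φ' r :=
        integral_const_mul _ _
  _ = (1 / c ^ (2*m+n+2)) * ∫ l in Ioi γ, G l := by
        rw [MeasureTheory.integral_comp_mul_deriv_Ioi hf hft hff' hg_cont hg1 hg2, hφ0]

lemma intOn0 {γ : ℝ} (hγ : 0 < γ) {s : ℝ} (hs : 0 ≤ s) :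
    IntegrableOn (fun l => Real.exp (-l) * (l ^ 2 - γ ^ 2) ^ s) (Ioi γ) := by
  simpa using integrableOn_aux hγ 0 hs

lemma Jpos {γ : ℝ} (hγ : 0 < γ) {s : ℝ} (hs : 0 ≤ s) :
    0 < ∫ l in Ioi γ, Real.exp (-l) * (l ^ 2 - γ ^ 2) ^ s := by
  rw [setIntegral_pos_iff_support_of_nonneg_ae]
  · have hsup : (Function.support fun l : ℝ => Real.exp (-l) * (l ^ 2 - γ ^ 2) ^ s) ∩ Ioi γ
        = Ioi γ := by
      rw [inter_eq_right]
      intro x hx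
      have hx' : γ < x := hx
      have hb : 0 < x ^ 2 - γ ^ 2 := by nlinarith
      rw [Function.mem_support]
      exact mul_ne_zero (Real.exp_pos _).ne' (Real.rpow_pos_of_pos hb _).ne'
    rw [hsup, volume_Ioi, ← ENNReal.ofReal_zero]
    exact ENNReal.ofReal_lt_top
  · refine eventually_of_mem (self_mem_ae_restrict measurableSet_Ioi) ?_
    intro x hx
    have hx' : γ < x := hx
    have hb : 0 < x ^ 2 - γ ^ 2 := by nlinarith
    exact (mul_pos (Real.exp_pos _) (Real.rpow_pos_of_pos hb _)).le
  · exact intOn0 hγ hs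

lemma Kb_pos {γ : ℝ} (hγ : 0 < γ) {j : ℕ} (hj : 1 ≤ j) : 0 < Kb j γ := by
  have hs : (0:ℝ) ≤ (j:ℝ) - 1/2 := by
    have : (1:ℝ) ≤ (j:ℝ) := by exact_mod_cast hj
    linarith
  apply mul_pos (mul_pos _ _) (Jpos hγ hs)
  · apply div_pos
    · positivity
    · exact_mod_cast Nat.factorial_pos (2*j)
  · exact Real.rpow_pos_of_pos hγ _

lemma J_eq_Kb {γ : ℝ} (hγ : 0 < γ) (j : ℕ) :
    ∫ l in Ioi γ, Real.exp (-l) * (l ^ 2 - γ ^ 2) ^ ((j:ℝ) - 1/2)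
      = γ ^ j * (Nat.factorial (2*j) : ℝ) / (2^j * Nat.factorial j) * Kb j γ := by
  rw [Kb, Real.rpow_neg hγ.le, Real.rpow_natCast]
  have h1 : ((Nat.factorial (2*j) : ℝ)) ≠ 0 := by exact_mod_cast (Nat.factorial_pos (2*j)).ne'
  have h2 : ((Nat.factorial j : ℝ)) ≠ 0 := by exact_mod_cast (Nat.factorial_pos j).ne'
  have h3 : (γ : ℝ) ^ j ≠ 0 := by positivity
  field_simp

lemma binom_expand {γ : ℝ} (hγ : 0 < γ) (m k : ℕ) :
    ∫ l in Ioi γ, Real.exp (-l) * l ^ (2*k) * (l ^ 2 - γ ^ 2) ^ ((m:ℝ) + 1/2)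
      = ∑ i ∈ Finset.range (k+1), (k.choose i : ℝ) * γ ^ (2*(k-i)) *
          ∫ l in Ioi γ, Real.exp (-l) * (l ^ 2 - γ ^ 2) ^ (((m+i:ℕ):ℝ) + 1/2) := by
  have hs0 : ∀ i : ℕ, (0:ℝ) ≤ ((m+i:ℕ):ℝ) + 1/2 := fun i => by positivity
  have hpt : ∀ l ∈ Ioi γ,
      Real.exp (-l) * l ^ (2*k) * (l ^ 2 - γ ^ 2) ^ ((m:ℝ) + 1/2)
      = ∑ i ∈ Finset.range (k+1), (k.choose i : ℝ) * γ ^ (2*(k-i)) *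
          (Real.exp (-l) * (l ^ 2 - γ ^ 2) ^ (((m+i:ℕ):ℝ) + 1/2)) := by
    intro l hl
    have hl' : γ < l := hl
    have hX : 0 < l ^ 2 - γ ^ 2 := by nlinarith
    have h1 : l ^ (2*k) = ∑ i ∈ Finset.range (k+1),
        (l ^ 2 - γ ^ 2) ^ i * (γ^2) ^ (k-i) * (k.choose i) := by
      conv_lhs => rw [pow_mul, show l^2 = (l^2 - γ^2) + γ^2 by ring]
      rw [add_pow]
    rw [h1, Finset.mul_sum, Finset.sum_mul]
    apply Finset.sum_congr rfl
    intro i hi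
    have key : (l ^ 2 - γ ^ 2) ^ i * (l ^ 2 - γ ^ 2) ^ ((m:ℝ) + 1/2)
        = (l ^ 2 - γ ^ 2) ^ (((m+i:ℕ):ℝ) + 1/2) := by
      rw [← Real.rpow_natCast (l ^ 2 - γ ^ 2) i, ← Real.rpow_add hX,
        show (i:ℝ) + ((m:ℝ) + 1/2) = ((m+i:ℕ):ℝ) + 1/2 by push_cast; ring]
    calc Real.exp (-l) * ((l ^ 2 - γ ^ 2) ^ i * (γ^2) ^ (k-i) * (k.choose i))
          * (l ^ 2 - γ ^ 2) ^ ((m:ℝ) + 1/2)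
        = ((γ^2) ^ (k-i) * (k.choose i)) * (Real.exp (-l) *
            ((l ^ 2 - γ ^ 2) ^ i * (l ^ 2 - γ ^ 2) ^ ((m:ℝ) + 1/2))) := by ring
      _ = (k.choose i : ℝ) * γ ^ (2*(k-i)) *
          (Real.exp (-l) * (l ^ 2 - γ ^ 2) ^ (((m+i:ℕ):ℝ) + 1/2)) := by
          rw [key, ← pow_mul]; ring
  rw [setIntegral_congr_fun measurableSet_Ioi hpt, integral_finset_sum]
  · exact Finset.sum_congr rfl fun i _ => integral_const_mul _ _
  · exact fun i _ => (intOn0 hγ (hs0 i)).const_mul _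

lemma core {c : ℝ} (hc : 0 < c) (m n : ℕ) :
    ∫ p : E3, ‖p‖ ^ (2*m) * pZ c p ^ ((n:ℤ) - 1) * Real.exp (-(c * pZ c p))
      = (4 * π / c ^ (2*m+n+2)) *
        ∫ l in Ioi (c^2), Real.exp (-l) * l ^ n * (l^2 - (c^2)^2) ^ ((m:ℝ) + 1/2) := by
  have h1 : (fun p : E3 => ‖p‖ ^ (2*m) * pZ c p ^ ((n:ℤ) - 1) * Real.exp (-(c * pZ c p)))
      = fun p : E3 => (fun r : ℝ => r ^ (2*m) * (Real.sqrt (c^2 + r^2)) ^ ((n:ℤ) - 1) *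
          Real.exp (-(c * Real.sqrt (c^2 + r^2)))) ‖p‖ := by
    funext p; simp only [pZ]
  rw [h1, sphere_reduce (fun r : ℝ => r ^ (2*m) * (Real.sqrt (c^2 + r^2)) ^ ((n:ℤ) - 1) *
          Real.exp (-(c * Real.sqrt (c^2 + r^2))))]
  have h2 : ∀ r ∈ Ioi (0:ℝ),
      r ^ 2 * (r ^ (2*m) * (Real.sqrt (c^2 + r^2)) ^ ((n:ℤ) - 1) *
        Real.exp (-(c * Real.sqrt (c^2 + r^2))))
      = r ^ (2*m+2) * (Real.sqrt (c^2 + r^2)) ^ ((n:ℤ) - 1) *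
        Real.exp (-(c * Real.sqrt (c^2 + r^2))) := fun r _ => by ring
  rw [setIntegral_congr_fun measurableSet_Ioi h2, subst_aux hc m n]
  ring

/-- Moments of the relativistic Maxwellian: for all `m, k ≥ 0`,
(i) `∫ |p|^{2m} μ^c(p) dp = ((2m+2)!/(2^{m+1}(m+1)!))·K_{m+2}(c²)/K₂(c²)`;
(ii) `∫ |p|^{2m} (p⁰)^{2k−1} μ^c(p) dp
  = Σ_{i=0}^{k} C(k,i)·((2(m+i+1))!/(2^{m+i+1}(m+i+1)!))·c^{2(k−i)−1}·K_{m+i+1}(c²)/K₂(c²)`. -/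
theorem stmt15 (c : ℝ) (hc : 0 < c) (m k : ℕ) :
    (∫ p : E3, ‖p‖ ^ (2 * m) * muC c p)
      = (Nat.factorial (2 * m + 2) : ℝ) / (2 ^ (m + 1) * Nat.factorial (m + 1)) *
          (Kb (m + 2) (c ^ 2) / Kb 2 (c ^ 2)) ∧
    (∫ p : E3, ‖p‖ ^ (2 * m) * pZ c p ^ (2 * (k : ℤ) - 1) * muC c p)
      = ∑ i ∈ Finset.range (k + 1),
          (Nat.choose k i : ℝ) *
            ((Nat.factorial (2 * (m + i + 1)) : ℝ) /
              (2 ^ (m + i + 1) * Nat.factorial (m + i + 1))) *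
            c ^ (2 * ((k : ℤ) - (i : ℤ)) - 1) *
            (Kb (m + i + 1) (c ^ 2) / Kb 2 (c ^ 2)) := by
  have hγ : (0:ℝ) < c^2 := by positivity
  have hK2 : Kb 2 (c^2) ≠ 0 := (Kb_pos hγ (by norm_num)).ne'
  have hπ : Real.pi ≠ 0 := Real.pi_ne_zero
  constructor
  · -- part (i)
    have step1 : (fun p : E3 => ‖p‖ ^ (2*m) * muC c p)
        = fun p : E3 => (‖p‖ ^ (2*m) *
            Real.exp (-(c * pZ c p))) * (4 * π * c * Kb 2 (c^2))⁻¹ := by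
      funext p
      simp only [muC]
      ring
    rw [step1, integral_mul_const]
    have hcore := core hc m 1
    simp only [Nat.cast_one, sub_self, zpow_zero, mul_one, pow_one] at hcore
    rw [hcore]
    have hs : (0:ℝ) ≤ (m:ℝ) + 1/2 := by positivity
    have hibp := ibp_aux hγ hs
    have h2s : (2 * ((m:ℝ) + 1/2 + 1)) ≠ 0 := by positivity
    have h3 : ∫ l in Ioi (c^2), Real.exp (-l) * l * (l^2 - (c^2)^2) ^ ((m:ℝ) + 1/2)
        = (∫ l in Ioi (c^2), Real.exp (-l) * (l^2 - (c^2)^2) ^ ((m:ℝ) + 1/2 + 1))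
            / (2 * ((m:ℝ) + 1/2 + 1)) := by
      rw [hibp, mul_comm, mul_div_assoc, div_self h2s, mul_one]
    rw [h3, show ((m:ℝ) + 1/2 + 1) = ((m+2:ℕ):ℝ) - 1/2 by push_cast; ring,
      J_eq_Kb hγ (m+2)]
    have f1 : (Nat.factorial (2*(m+2)) : ℝ)
        = (2*(m:ℝ)+4) * ((2*(m:ℝ)+3) * (Nat.factorial (2*m+2) : ℝ)) := by
      rw [show 2*(m+2) = (2*m+3)+1 by ring, Nat.factorial_succ,
        show 2*m+3 = (2*m+2)+1 by ring, Nat.factorial_succ]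
      push_cast; ring
    have f2 : (Nat.factorial (m+2) : ℝ) = ((m:ℝ)+2) * (Nat.factorial (m+1) : ℝ) := by
      rw [show m+2 = (m+1)+1 by ring, Nat.factorial_succ]; push_cast; ring
    have fpow : ((c^2:ℝ)) ^ (m+2) = c ^ (2*(m+2)) := (pow_mul c 2 (m+2)).symm
    rw [f1, f2, fpow]
    have hfm1 : ((Nat.factorial (m+1) : ℝ)) ≠ 0 := by
      exact_mod_cast (Nat.factorial_pos (m+1)).ne'
    have hfm2 : ((Nat.factorial (2*m+2) : ℝ)) ≠ 0 := by
      exact_mod_cast (Nat.factorial_pos (2*m+2)).ne'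
    have hm2 : ((m:ℝ)+2) ≠ 0 := by positivity
    have h2s' : (2*(m:ℝ)+3) ≠ 0 := by positivity
    rw [show (2 * (((m+2:ℕ):ℝ) - 1/2)) = 2*(m:ℝ)+3 by push_cast; ring]
    field_simp [hπ, hc.ne', hK2, hfm1, hfm2, hm2, h2s']
    ring
  · -- part (ii)
    have step1 : (fun p : E3 => ‖p‖ ^ (2*m) * pZ c p ^ (2 * (k:ℤ) - 1) * muC c p)
        = fun p : E3 => (‖p‖ ^ (2*m) * pZ c p ^ (((2*k:ℕ):ℤ) - 1) *
            Real.exp (-(c * pZ c p))) * (4 * π * c * Kb 2 (c^2))⁻¹ := by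
      funext p
      simp only [muC]
      rw [show (((2*k:ℕ):ℤ) - 1) = 2 * (k:ℤ) - 1 by push_cast; ring]
      ring
    rw [step1, integral_mul_const, core hc m (2*k), binom_expand hγ m k,
      Finset.mul_sum, Finset.sum_mul]
    apply Finset.sum_congr rfl
    intro i hi
    have hik : i ≤ k := Nat.lt_succ_iff.mp (Finset.mem_range.mp hi)
    obtain ⟨j, rfl⟩ : ∃ j, k = i + j := ⟨k - i, (Nat.add_sub_cancel' hik).symm⟩
    have hsub : i + j - i = j := by omega
    rw [hsub, show (((m+i:ℕ):ℝ) + 1/2) = ((m+i+1:ℕ):ℝ) - 1/2 by push_cast; ring,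
      J_eq_Kb hγ (m+i+1)]
    have hz : (2 * (((i+j:ℕ):ℤ) - (i:ℤ)) - 1) = ((2*j:ℕ):ℤ) - 1 := by push_cast; ring
    rw [hz, zpow_sub_one₀ hc.ne', zpow_natCast]
    have fpow1 : ((c^2:ℝ)) ^ (2*j) = c ^ (2*(2*j)) := (pow_mul c 2 (2*j)).symm
    have fpow2 : ((c^2:ℝ)) ^ (m+i+1) = c ^ (2*(m+i+1)) := (pow_mul c 2 (m+i+1)).symm
    rw [fpow1, fpow2]
    have hfm1 : ((Nat.factorial (m+i+1) : ℝ)) ≠ 0 := by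
      exact_mod_cast (Nat.factorial_pos (m+i+1)).ne'
    have hfm2 : ((Nat.factorial (2*(m+i+1)) : ℝ)) ≠ 0 := by
      exact_mod_cast (Nat.factorial_pos (2*(m+i+1))).ne'
    field_simp
    ring

end
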